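/- Let −∞ < γ₀ < γ₁ < 1, let 𝐅 be a Borel probability measure on (γ₀, γ₁), and define the CRRA utilities U_γ(x) = (x^γ − 1)/γ for γ ≠ 0 and U₀(x) = log x, and F(x) = ∫_{(γ₀,γ₁)} U_γ(x) d𝐅(γ) for x > 0. Let x ≥ 0 and let H(x) > 0 satisfy ∫_ℝ F(e^{√x t}/H(x)) dN(t) = 0, where N is the standard Gaussian (normal N(0,1)) probability measure on ℝ. Then H(x)·∫_ℝ e^{√x t} F'(e^{√x t}/H(x)) dN(t) / (−∫_ℝ e^{2√x t} F''(e^{√x t}/H(x)) dN(t)) = ∫_{(γ₀,γ₁)} (H(x))^{1−γ} e^{γ²x/2} d𝐅(γ) / ∫_{(γ₀,γ₁)} (1−γ)(H(x))^{1−γ} e^{γ²x/2} d𝐅(γ). -/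

import Mathlib

open MeasureTheory ProbabilityTheory Set
open scoped ENNReal NNReal

/-! ### Gaussian auxiliary lemmas -/

lemma gauss_integral_eq (g : ℝ → ℝ) :
    ∫ t, g t ∂(gaussianReal 0 1) = ∫ t, gaussianPDFReal 0 1 t * g t := by
  rw [gaussianReal_of_var_ne_zero 0 one_ne_zero]
  have hmeas : Measurable fun t => (gaussianPDFReal 0 1 t).toNNReal :=
    (measurable_gaussianPDFReal 0 1).real_toNNReal
  have heq : (gaussianPDF 0 1) = fun t => ((gaussianPDFReal 0 1 t).toNNReal : ℝ≥0∞) := by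
    funext t; simp [gaussianPDF, ENNReal.ofReal]
  rw [heq, integral_withDensity_eq_integral_smul hmeas]
  refine integral_congr_ae (Filter.Eventually.of_forall fun t => ?_)
  simp [NNReal.smul_def, Real.coe_toNNReal _ (gaussianPDFReal_nonneg 0 1 t)]

lemma gauss_pdf_mul_exp (c t : ℝ) :
    gaussianPDFReal 0 1 t * Real.exp (c * t) =
      Real.exp (c ^ 2 / 2) * gaussianPDFReal c 1 t := by
  simp only [gaussianPDFReal]
  rw [mul_assoc, ← Real.exp_add, mul_left_comm, ← Real.exp_add]
  congr 1
  push_cast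
  ring_nf

lemma gauss_exp_integrable (c : ℝ) :
    Integrable (fun t => Real.exp (c * t)) (gaussianReal 0 1) := by
  rw [gaussianReal_of_var_ne_zero 0 one_ne_zero]
  have hmeas : Measurable fun t => (gaussianPDFReal 0 1 t).toNNReal :=
    (measurable_gaussianPDFReal 0 1).real_toNNReal
  have heq : (gaussianPDF 0 1) = fun t => ((gaussianPDFReal 0 1 t).toNNReal : ℝ≥0∞) := by
    funext t; simp [gaussianPDF, ENNReal.ofReal]
  rw [heq, integrable_withDensity_iff_integrable_smul hmeas]
  have : (fun t => ((gaussianPDFReal 0 1 t).toNNReal : ℝ≥0) • Real.exp (c * t))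
      = fun t => Real.exp (c ^ 2 / 2) * gaussianPDFReal c 1 t := by
    funext t
    simp only [NNReal.smul_def, Real.coe_toNNReal _ (gaussianPDFReal_nonneg 0 1 t)]
    exact gauss_pdf_mul_exp c t
  rw [this]
  exact (integrable_gaussianPDFReal c 1).const_mul _

lemma gauss_exp_integral (c : ℝ) :
    ∫ t, Real.exp (c * t) ∂(gaussianReal 0 1) = Real.exp (c ^ 2 / 2) := by
  rw [gauss_integral_eq]
  simp_rw [gauss_pdf_mul_exp]
  rw [integral_const_mul, integral_gaussianPDFReal_eq_one c one_ne_zero, mul_one]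

/-! ### Elementary inequalities -/

lemma abs_exp_sub_one_le' (y : ℝ) : |Real.exp y - 1| ≤ |y| * Real.exp |y| := by
  have h0 : 1 - |y| ≤ Real.exp (-|y|) := by
    have := Real.add_one_le_exp (-|y|); linarith
  have h1 : Real.exp (-|y|) * Real.exp |y| = 1 := by
    rw [← Real.exp_add]; simp
  have hpos := Real.exp_pos |y|
  have h2 : Real.exp |y| - 1 ≤ |y| * Real.exp |y| := by nlinarith
  have h3 : |Real.exp y - 1| ≤ Real.exp |y| - 1 := by
    rcases abs_cases y with ⟨h, h'⟩ | ⟨h, h'⟩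
    · rw [h, abs_of_nonneg (by linarith [Real.one_le_exp h'] : (0:ℝ) ≤ Real.exp y - 1)]
    · rw [h]
      have hy1 : Real.exp y ≤ 1 := Real.exp_le_one_iff.2 h'.le
      have hy2 : Real.exp y * Real.exp (-y) = 1 := by rw [← Real.exp_add]; simp
      have hy3 := Real.exp_pos y
      rw [abs_of_nonpos (by linarith)]
      nlinarith [sq_nonneg (Real.exp y - 1)]
  linarith

lemma norm_rpow_le {u p M K : ℝ} (hu : 0 < u) (hp : |p| ≤ M) (hK : |Real.log u| ≤ K) :
    ‖u ^ p‖ ≤ Real.exp (M * K) := by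
  rw [Real.norm_eq_abs, Real.rpow_def_of_pos hu, Real.abs_exp]
  apply Real.exp_le_exp.2
  calc Real.log u * p ≤ |Real.log u * p| := le_abs_self _
    _ = |Real.log u| * |p| := abs_mul _ _
    _ ≤ K * M := mul_le_mul hK hp (abs_nonneg _) ((abs_nonneg _).trans hK)
    _ = M * K := mul_comm _ _

lemma log_bound {u v : ℝ} (hu : 0 < u) (hv : v ∈ Metric.ball u (u / 2)) :
    0 < v ∧ |Real.log v| ≤ |Real.log (u / 2)| + |Real.log (2 * u)| := by
  rw [Metric.mem_ball, Real.dist_eq] at hv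
  obtain ⟨hv1, hv2⟩ := abs_lt.1 hv
  have h1 : u / 2 < v := by linarith
  have h2 : v < 2 * u := by linarith
  have hv0 : (0 : ℝ) < v := lt_trans (by linarith) h1
  refine ⟨hv0, abs_le.2 ⟨?_, ?_⟩⟩
  · have l1 : Real.log (u / 2) ≤ Real.log v := Real.log_le_log (by positivity) h1.le
    linarith [neg_abs_le (Real.log (u / 2)), abs_nonneg (Real.log (2 * u))]
  · have l2 : Real.log v ≤ Real.log (2 * u) := Real.log_le_log hv0 h2.le
    linarith [le_abs_self (Real.log (2 * u)), abs_nonneg (Real.log (u / 2))]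

/-! ### CRRA utility derivative -/

lemma crra_hasDerivAt (γ : ℝ) {u : ℝ} (hu : 0 < u) :
    HasDerivAt (fun v : ℝ => if γ = 0 then Real.log v else (v ^ γ - 1) / γ)
      (u ^ (γ - 1)) u := by
  by_cases h : γ = 0
  · subst h
    have he : (fun v : ℝ => if (0:ℝ) = 0 then Real.log v else (v ^ (0:ℝ) - 1) / 0)
        = Real.log := by funext v; simp
    rw [he]
    have := Real.hasDerivAt_log hu.ne'
    simpa [zero_sub, Real.rpow_neg_one] using this
  · have he : (fun v : ℝ => if γ = 0 then Real.log v else (v ^ γ - 1) / γ)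
        = fun v : ℝ => (v ^ γ - 1) / γ := by funext v; rw [if_neg h]
    rw [he]
    have hd : HasDerivAt (fun v : ℝ => v ^ γ) (γ * u ^ (γ - 1)) u :=
      Real.hasDerivAt_rpow_const (Or.inl hu.ne')
    have := (hd.sub_const 1).div_const γ
    simpa [mul_div_assoc, mul_div_cancel_left₀ _ h] using this

lemma measurable_crra (v : ℝ) (hv : 0 < v) :
    Measurable fun γ : ℝ => if γ = 0 then Real.log v else (v ^ γ - 1) / γ := by
  have h2 : Measurable fun γ : ℝ => (v ^ γ - 1) / γ := by
    have he : (fun γ : ℝ => (v ^ γ - 1) / γ)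
        = fun γ : ℝ => (Real.exp (Real.log v * γ) - 1) / γ := by
      funext γ; rw [Real.rpow_def_of_pos hv]
    rw [he]
    exact ((Real.measurable_exp.comp (measurable_id.const_mul _)).sub
      measurable_const).div measurable_id
  have hs : MeasurableSet {γ : ℝ | γ = 0} := by
    simpa [Set.setOf_eq_eq_singleton] using measurableSet_singleton (0:ℝ)
  exact Measurable.ite hs measurable_const h2

lemma measurable_rpow_shift (v c : ℝ) (hv : 0 < v) :
    Measurable fun γ : ℝ => v ^ (γ - c) := by
  have he : (fun γ : ℝ => v ^ (γ - c))
      = fun γ : ℝ => Real.exp (Real.log v * (γ - c)) := by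
    funext γ; rw [Real.rpow_def_of_pos hv]
  rw [he]
  exact Real.measurable_exp.comp ((measurable_id.sub measurable_const).const_mul _)

/-! ### Differentiation under the integral sign -/

lemma integral_crra_hasDerivAt (μF : Measure ℝ) [IsProbabilityMeasure μF] {M : ℝ}
    (hM : ∀ᵐ γ ∂μF, |γ| ≤ M) {u : ℝ} (hu : 0 < u) :
    Integrable (fun γ => u ^ (γ - 1)) μF ∧
    HasDerivAt (fun v : ℝ => ∫ γ, (if γ = 0 then Real.log v else (v ^ γ - 1) / γ) ∂μF)
      (∫ γ, u ^ (γ - 1) ∂μF) u := by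
  have hM0 : (0:ℝ) ≤ M := by
    have : ∃ γ, |γ| ≤ M := by
      rcases hM.exists with ⟨γ, hγ⟩; exact ⟨γ, hγ⟩
    rcases this with ⟨γ, hγ⟩; exact (abs_nonneg γ).trans hγ
  set K : ℝ := |Real.log (u / 2)| + |Real.log (2 * u)| with hK
  refine hasDerivAt_integral_of_dominated_loc_of_deriv_le (s := Metric.ball u (u / 2))
    (F := fun v γ => if γ = 0 then Real.log v else (v ^ γ - 1) / γ)
    (F' := fun v γ => v ^ (γ - 1)) (bound := fun _ => Real.exp ((M + 1) * K))
    (Metric.ball_mem_nhds u (half_pos hu)) ?_ ?_ ?_ ?_ (integrable_const _) ?_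
  · exact Filter.Eventually.of_forall fun v => by
      show AEStronglyMeasurable
        (fun γ : ℝ => if γ = 0 then Real.log v else (v ^ γ - 1) / γ) μF
      by_cases hv : 0 < v
      · exact (measurable_crra v hv).aestronglyMeasurable
      · rcases eq_or_lt_of_le (not_lt.1 hv) with hv0 | hv0
        · -- v = 0
          have he : (fun γ : ℝ => if γ = 0 then Real.log v else (v ^ γ - 1) / γ)
              = fun γ : ℝ => if γ = 0 then Real.log v
                  else ((if γ = 0 then (1:ℝ) else 0) - 1) / γ := by
            funext γ
            by_cases h : γ = 0
            · simp [h]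
            · rw [if_neg h, if_neg h, if_neg h, hv0, Real.zero_rpow h]
          rw [he]
          have hs : MeasurableSet {γ : ℝ | γ = 0} := by
            simpa [Set.setOf_eq_eq_singleton] using measurableSet_singleton (0:ℝ)
          exact (Measurable.ite hs measurable_const
            (((Measurable.ite hs measurable_const measurable_const).sub
              measurable_const).div measurable_id)).aestronglyMeasurable
        · -- v < 0
          have he : (fun γ : ℝ => if γ = 0 then Real.log v else (v ^ γ - 1) / γ)
              = fun γ : ℝ => if γ = 0 then Real.log v
                  else (Real.exp (Real.log v * γ) * Real.cos (γ * Real.pi) - 1) / γ := by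
            funext γ
            by_cases h : γ = 0
            · simp [h]
            · rw [if_neg h, if_neg h, Real.rpow_def_of_neg hv0]
          rw [he]
          have hs : MeasurableSet {γ : ℝ | γ = 0} := by
            simpa [Set.setOf_eq_eq_singleton] using measurableSet_singleton (0:ℝ)
          refine (Measurable.ite hs measurable_const ?_).aestronglyMeasurable
          exact (((Real.measurable_exp.comp (measurable_id.const_mul _)).mul
            (Real.measurable_cos.comp (measurable_id.mul_const _))).sub
            measurable_const).div measurable_id
  · -- integrability at the base point
    refine Integrable.mono' (g := fun _ => |Real.log u| * Real.exp (M * |Real.log u|))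
      (integrable_const _) (measurable_crra u hu).aestronglyMeasurable ?_
    filter_upwards [hM] with γ hγ
    by_cases h : γ = 0
    · subst h
      simp only [if_pos rfl, Real.norm_eq_abs]
      exact le_mul_of_one_le_right (abs_nonneg _)
        (Real.one_le_exp (mul_nonneg hM0 (abs_nonneg _)))
    · rw [if_neg h, Real.norm_eq_abs, abs_div]
      rw [div_le_iff₀ (abs_pos.2 h)]
      have h1 : |u ^ γ - 1| ≤ (|Real.log u| * |γ|) * Real.exp (|Real.log u| * M) := by
        rw [Real.rpow_def_of_pos hu]
        refine (abs_exp_sub_one_le' _).trans ?_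
        rw [abs_mul]
        gcongr
      refine h1.trans (le_of_eq ?_)
      rw [mul_comm (|Real.log u|) M]
      ring
  · exact (measurable_rpow_shift u 1 hu).aestronglyMeasurable
  · filter_upwards [hM] with γ hγ
    intro v hv
    obtain ⟨hv0, hlog⟩ := log_bound hu hv
    refine norm_rpow_le hv0 ?_ hlog
    calc |γ - 1| ≤ |γ| + |(1:ℝ)| := abs_sub _ _
      _ ≤ M + 1 := by simpa using add_le_add_right hγ 1
  · refine Filter.Eventually.of_forall fun γ => fun v hv => ?_
    exact crra_hasDerivAt γ (log_bound hu hv).1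

lemma integral_rpow_hasDerivAt (μF : Measure ℝ) [IsProbabilityMeasure μF] {M : ℝ}
    (hM : ∀ᵐ γ ∂μF, |γ| ≤ M) {u : ℝ} (hu : 0 < u) :
    HasDerivAt (fun v : ℝ => ∫ γ, v ^ (γ - 1) ∂μF)
      (∫ γ, (γ - 1) * u ^ (γ - 2) ∂μF) u := by
  have hM0 : (0:ℝ) ≤ M := by
    rcases hM.exists with ⟨γ, hγ⟩; exact (abs_nonneg γ).trans hγ
  set K : ℝ := |Real.log (u / 2)| + |Real.log (2 * u)| with hKdef
  refine (hasDerivAt_integral_of_dominated_loc_of_deriv_le (s := Metric.ball u (u / 2))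
    (F := fun v γ => v ^ (γ - 1)) (F' := fun v γ => (γ - 1) * v ^ (γ - 2))
    (bound := fun _ => (M + 1) * Real.exp ((M + 2) * K))
    (Metric.ball_mem_nhds u (half_pos hu)) ?_ ?_ ?_ ?_ (integrable_const _) ?_).2
  · filter_upwards [isOpen_Ioi.mem_nhds hu] with v hv
    exact (measurable_rpow_shift v 1 hv).aestronglyMeasurable
  · refine Integrable.mono' (g := fun _ => Real.exp ((M + 1) * |Real.log u|))
      (integrable_const _) (measurable_rpow_shift u 1 hu).aestronglyMeasurable ?_
    filter_upwards [hM] with γ hγ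
    refine norm_rpow_le hu ?_ le_rfl
    calc |γ - 1| ≤ |γ| + |(1:ℝ)| := abs_sub _ _
      _ ≤ M + 1 := by simpa using add_le_add_right hγ 1
  · exact ((measurable_id.sub measurable_const).mul
      (measurable_rpow_shift u 2 hu)).aestronglyMeasurable
  · filter_upwards [hM] with γ hγ
    intro v hv
    obtain ⟨hv0, hlog⟩ := log_bound hu hv
    rw [norm_mul]
    refine mul_le_mul ?_ (norm_rpow_le hv0 ?_ hlog) (norm_nonneg _) (by linarith)
    · rw [Real.norm_eq_abs]
      calc |γ - 1| ≤ |γ| + |(1:ℝ)| := abs_sub _ _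
        _ ≤ M + 1 := by simpa using add_le_add_right hγ 1
    · calc |γ - 2| ≤ |γ| + |(2:ℝ)| := abs_sub _ _
        _ ≤ M + 2 := by
          rw [show |(2:ℝ)| = 2 by norm_num]
          linarith
  · refine Filter.Eventually.of_forall fun γ => fun v hv => ?_
    have hv0 := (log_bound hu hv).1
    have h := Real.hasDerivAt_rpow_const (x := v) (p := γ - 1) (Or.inl hv0.ne')
    rwa [show γ - 1 - 1 = γ - 2 by ring] at h

lemma rpow_exp_div {Hx : ℝ} (hHx : 0 < Hx) (a p : ℝ) :
    (Real.exp a / Hx) ^ p = Real.exp (p * a - p * Real.log Hx) := by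
  rw [Real.rpow_def_of_pos (div_pos (Real.exp_pos a) hHx),
    Real.log_div (Real.exp_ne_zero a) hHx.ne', Real.log_exp]
  ring_nf

lemma swap_lemma (μF : Measure ℝ) [IsProbabilityMeasure μF] {M : ℝ}
    (hM : ∀ᵐ γ ∂μF, |γ| ≤ M) (g : ℝ × ℝ → ℝ) (hcont : Continuous g) (C m : ℝ)
    (hbound : ∀ t γ : ℝ, |γ| ≤ M →
      ‖g (t, γ)‖ ≤ C * (Real.exp (m * t) + Real.exp ((-m) * t))) :
    ∫ t, ∫ γ, g (t, γ) ∂μF ∂(gaussianReal 0 1)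
      = ∫ γ, ∫ t, g (t, γ) ∂(gaussianReal 0 1) ∂μF := by
  refine integral_integral_swap ?_
  have hprod_ae : ∀ᵐ p ∂((gaussianReal 0 1).prod μF), |p.2| ≤ M := by
    rw [ae_iff]
    have hset : {p : ℝ × ℝ | ¬ |p.2| ≤ M} = (univ : Set ℝ) ×ˢ {γ : ℝ | ¬ |γ| ≤ M} := by
      ext p; simp
    rw [hset, Measure.prod_prod, ae_iff.1 hM, mul_zero]
  have hbi : Integrable
      (fun p : ℝ × ℝ => C * (Real.exp (m * p.1) + Real.exp ((-m) * p.1)))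
      ((gaussianReal 0 1).prod μF) := by
    have h1 : Integrable (fun t => C * (Real.exp (m * t) + Real.exp ((-m) * t)))
        (gaussianReal 0 1) :=
      ((gauss_exp_integrable m).add (gauss_exp_integrable (-m))).const_mul C
    simpa using h1.mul_prod (integrable_const (1:ℝ)) (ν := μF)
  refine Integrable.mono' hbi hcont.aestronglyMeasurable ?_
  filter_upwards [hprod_ae] with p hp
  simpa [Function.uncurry_def] using hbound p.1 p.2 hp

/-- Example 4.2 of the paper (mixed CRRA utility): the explicit formula (4.16) for
the function `G`, where `F(x) = ∫ U_γ(x) d𝐅(γ)` is a mixture of CRRA utilities. -/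
theorem stmt_9 (γ₀ γ₁ : ℝ) (h₀₁ : γ₀ < γ₁) (h₁ : γ₁ < 1)
    (μF : Measure ℝ) [IsProbabilityMeasure μF] (hsupp : μF (Ioo γ₀ γ₁)ᶜ = 0)
    (x : ℝ) (hx : 0 ≤ x) (Hx : ℝ) (hHx : 0 < Hx)
    (hroot : (∫ t, (fun u : ℝ => ∫ γ, (if γ = 0 then Real.log u else (u ^ γ - 1) / γ) ∂μF)
        (Real.exp (Real.sqrt x * t) / Hx) ∂(gaussianReal 0 1)) = 0) :
    Hx * (∫ t, Real.exp (Real.sqrt x * t) *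
        deriv (fun u : ℝ => ∫ γ, (if γ = 0 then Real.log u else (u ^ γ - 1) / γ) ∂μF)
          (Real.exp (Real.sqrt x * t) / Hx) ∂(gaussianReal 0 1)) /
      (-(∫ t, Real.exp (2 * Real.sqrt x * t) *
        deriv (deriv (fun u : ℝ => ∫ γ, (if γ = 0 then Real.log u else (u ^ γ - 1) / γ) ∂μF))
          (Real.exp (Real.sqrt x * t) / Hx) ∂(gaussianReal 0 1))) =
    (∫ γ, Hx ^ (1 - γ) * Real.exp (γ ^ 2 * x / 2) ∂μF) /
      (∫ γ, (1 - γ) * Hx ^ (1 - γ) * Real.exp (γ ^ 2 * x / 2) ∂μF) := by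
  clear hroot
  have hae : ∀ᵐ γ ∂μF, γ ∈ Ioo γ₀ γ₁ := by
    rw [ae_iff]; exact hsupp
  set M : ℝ := |γ₀| + |γ₁| + 1 with hMdef
  have hM : ∀ᵐ γ ∂μF, |γ| ≤ M := by
    filter_upwards [hae] with γ hγ
    obtain ⟨hg1, hg2⟩ := hγ
    rw [abs_le]
    constructor
    · have := neg_abs_le γ₀
      have := abs_nonneg γ₁
      linarith
    · have := le_abs_self γ₁
      have := abs_nonneg γ₀
      linarith
  set s : ℝ := Real.sqrt x with hs
  have hs0 : 0 ≤ s := Real.sqrt_nonneg x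
  have hsq : s ^ 2 = x := Real.sq_sqrt hx
  have hL : Real.log Hx = Real.log Hx := rfl
  set L : ℝ := Real.log Hx with hLdef
  have hpos : ∀ t : ℝ, 0 < Real.exp (s * t) / Hx :=
    fun t => div_pos (Real.exp_pos _) hHx
  have hD1 : ∀ t : ℝ,
      deriv (fun u : ℝ => ∫ γ, (if γ = 0 then Real.log u else (u ^ γ - 1) / γ) ∂μF)
          (Real.exp (s * t) / Hx)
        = ∫ γ, (Real.exp (s * t) / Hx) ^ (γ - 1) ∂μF :=
    fun t => ((integral_crra_hasDerivAt μF hM (hpos t)).2).deriv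
  have hD2 : ∀ t : ℝ,
      deriv (deriv (fun u : ℝ => ∫ γ, (if γ = 0 then Real.log u else (u ^ γ - 1) / γ) ∂μF))
          (Real.exp (s * t) / Hx)
        = ∫ γ, (γ - 1) * (Real.exp (s * t) / Hx) ^ (γ - 2) ∂μF := by
    intro t
    have hev : deriv (fun u : ℝ => ∫ γ, (if γ = 0 then Real.log u else (u ^ γ - 1) / γ) ∂μF)
        =ᶠ[nhds (Real.exp (s * t) / Hx)] (fun v => ∫ γ, v ^ (γ - 1) ∂μF) := by
      filter_upwards [isOpen_Ioi.mem_nhds (hpos t)] with v hv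
      exact ((integral_crra_hasDerivAt μF hM hv).2).deriv
    rw [hev.deriv_eq, (integral_rpow_hasDerivAt μF hM (hpos t)).deriv]
  -- inner Gaussian integral
  have hinner : ∀ c γ : ℝ, (∫ t, Real.exp (c + γ * (s * t)) ∂(gaussianReal 0 1))
      = Real.exp c * Real.exp (γ ^ 2 * x / 2) := by
    intro c γ
    have he : (fun t => Real.exp (c + γ * (s * t)))
        = fun t => Real.exp c * Real.exp ((γ * s) * t) := by
      funext t
      rw [← Real.exp_add]
      congr 1; ring
    rw [he, integral_const_mul, gauss_exp_integral (γ * s)]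
    congr 2
    rw [mul_pow, hsq]
  -- numerator
  have hnum : (∫ t, Real.exp (s * t) *
        deriv (fun u : ℝ => ∫ γ, (if γ = 0 then Real.log u else (u ^ γ - 1) / γ) ∂μF)
          (Real.exp (s * t) / Hx) ∂(gaussianReal 0 1))
      = ∫ γ, Hx ^ (1 - γ) * Real.exp (γ ^ 2 * x / 2) ∂μF := by
    have e1 : ∀ t : ℝ, Real.exp (s * t) *
        deriv (fun u : ℝ => ∫ γ, (if γ = 0 then Real.log u else (u ^ γ - 1) / γ) ∂μF)
          (Real.exp (s * t) / Hx)
        = ∫ γ, Real.exp ((1 - γ) * L + γ * (s * t)) ∂μF := by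
      intro t
      rw [hD1 t, ← integral_const_mul]
      refine integral_congr_ae (Filter.Eventually.of_forall fun γ => ?_)
      show Real.exp (s * t) * (Real.exp (s * t) / Hx) ^ (γ - 1)
          = Real.exp ((1 - γ) * L + γ * (s * t))
      rw [rpow_exp_div hHx, ← Real.exp_add]
      congr 1; ring
    rw [integral_congr_ae (Filter.Eventually.of_forall e1)]
    rw [swap_lemma μF hM (fun p : ℝ × ℝ => Real.exp ((1 - p.2) * L + p.2 * (s * p.1)))
      (by fun_prop) (Real.exp ((M + 1) * |L|)) (M * s) ?_]
    · refine integral_congr_ae (Filter.Eventually.of_forall fun γ => ?_)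
      simp only
      rw [hinner ((1 - γ) * L) γ]
      congr 1
      rw [Real.rpow_def_of_pos hHx, mul_comm]
    · intro t γ hγ
      simp only [Real.norm_eq_abs, Real.exp_add, abs_mul, Real.abs_exp]
      have b1 : Real.exp ((1 - γ) * L) ≤ Real.exp ((M + 1) * |L|) := by
        apply Real.exp_le_exp.2
        calc (1 - γ) * L ≤ |(1 - γ) * L| := le_abs_self _
          _ = |1 - γ| * |L| := abs_mul _ _
          _ ≤ (M + 1) * |L| := by
            refine mul_le_mul_of_nonneg_right ?_ (abs_nonneg _)
            calc |1 - γ| ≤ |(1:ℝ)| + |γ| := abs_sub _ _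
              _ ≤ M + 1 := by simp; linarith
      have b2 : Real.exp (γ * (s * t)) ≤
          Real.exp ((M * s) * t) + Real.exp ((-(M * s)) * t) := by
        rcases le_or_gt 0 t with ht | ht
        · refine le_trans ?_ (le_add_of_nonneg_right (Real.exp_pos _).le)
          apply Real.exp_le_exp.2
          have hst : 0 ≤ s * t := mul_nonneg hs0 ht
          have : γ * (s * t) ≤ M * (s * t) :=
            mul_le_mul_of_nonneg_right ((le_abs_self γ).trans hγ) hst
          linarith [this, (by ring : M * (s * t) = (M * s) * t)]
        · refine le_trans ?_ (le_add_of_nonneg_left (Real.exp_pos _).le)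
          apply Real.exp_le_exp.2
          have hst : s * t ≤ 0 := mul_nonpos_of_nonneg_of_nonpos hs0 ht.le
          have h1 : -M ≤ γ := (abs_le.1 hγ).1
          have : γ * (s * t) ≤ (-M) * (s * t) := mul_le_mul_of_nonpos_right h1 hst
          nlinarith [this]
      exact mul_le_mul b1 b2 (Real.exp_pos _).le (Real.exp_pos _).le
  -- denominator
  have hden : -(∫ t, Real.exp (2 * s * t) *
        deriv (deriv (fun u : ℝ => ∫ γ, (if γ = 0 then Real.log u else (u ^ γ - 1) / γ) ∂μF))
          (Real.exp (s * t) / Hx) ∂(gaussianReal 0 1))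
      = Hx * ∫ γ, (1 - γ) * Hx ^ (1 - γ) * Real.exp (γ ^ 2 * x / 2) ∂μF := by
    have e1 : ∀ t : ℝ, Real.exp (2 * s * t) *
        deriv (deriv (fun u : ℝ => ∫ γ, (if γ = 0 then Real.log u else (u ^ γ - 1) / γ) ∂μF))
          (Real.exp (s * t) / Hx)
        = ∫ γ, (γ - 1) * Real.exp ((2 - γ) * L + γ * (s * t)) ∂μF := by
      intro t
      rw [hD2 t, ← integral_const_mul]
      refine integral_congr_ae (Filter.Eventually.of_forall fun γ => ?_)
      show Real.exp (2 * s * t) * ((γ - 1) * (Real.exp (s * t) / Hx) ^ (γ - 2))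
          = (γ - 1) * Real.exp ((2 - γ) * L + γ * (s * t))
      rw [rpow_exp_div hHx, mul_left_comm, ← Real.exp_add]
      congr 2; ring
    rw [integral_congr_ae (Filter.Eventually.of_forall e1)]
    rw [swap_lemma μF hM
      (fun p : ℝ × ℝ => (p.2 - 1) * Real.exp ((2 - p.2) * L + p.2 * (s * p.1)))
      (by fun_prop) ((M + 1) * Real.exp ((M + 2) * |L|)) (M * s) ?_]
    · rw [← integral_neg, ← integral_const_mul]
      refine integral_congr_ae (Filter.Eventually.of_forall fun γ => ?_)
      simp only
      rw [integral_const_mul, hinner ((2 - γ) * L) γ]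
      have h2γ : Real.exp ((2 - γ) * L) = Hx * Hx ^ (1 - γ) := by
        rw [show Hx ^ (1 - γ) = Real.exp (L * (1 - γ)) from Real.rpow_def_of_pos hHx _,
          ← Real.exp_log hHx, ← Real.exp_add, hLdef]
        congr 1
        ring
      rw [h2γ]
      ring
    · intro t γ hγ
      simp only [Real.norm_eq_abs, Real.exp_add, abs_mul, Real.abs_exp]
      have b0 : |γ - 1| ≤ M + 1 := by
        calc |γ - 1| ≤ |γ| + |(1:ℝ)| := abs_sub _ _
          _ ≤ M + 1 := by simp; linarith
      have b1 : Real.exp ((2 - γ) * L) ≤ Real.exp ((M + 2) * |L|) := by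
        apply Real.exp_le_exp.2
        calc (2 - γ) * L ≤ |(2 - γ) * L| := le_abs_self _
          _ = |2 - γ| * |L| := abs_mul _ _
          _ ≤ (M + 2) * |L| := by
            refine mul_le_mul_of_nonneg_right ?_ (abs_nonneg _)
            calc |2 - γ| ≤ |(2:ℝ)| + |γ| := abs_sub _ _
              _ ≤ M + 2 := by
                rw [show |(2:ℝ)| = 2 by norm_num]; linarith
      have b2 : Real.exp (γ * (s * t)) ≤
          Real.exp ((M * s) * t) + Real.exp ((-(M * s)) * t) := by
        rcases le_or_gt 0 t with ht | ht
        · refine le_trans ?_ (le_add_of_nonneg_right (Real.exp_pos _).le)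
          apply Real.exp_le_exp.2
          have hst : 0 ≤ s * t := mul_nonneg hs0 ht
          have : γ * (s * t) ≤ M * (s * t) :=
            mul_le_mul_of_nonneg_right ((le_abs_self γ).trans hγ) hst
          nlinarith [this]
        · refine le_trans ?_ (le_add_of_nonneg_left (Real.exp_pos _).le)
          apply Real.exp_le_exp.2
          have hst : s * t ≤ 0 := mul_nonpos_of_nonneg_of_nonpos hs0 ht.le
          have h1 : -M ≤ γ := (abs_le.1 hγ).1
          have : γ * (s * t) ≤ (-M) * (s * t) := mul_le_mul_of_nonpos_right h1 hst
          nlinarith [this]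
      calc |γ - 1| * (Real.exp ((2 - γ) * L) * Real.exp (γ * (s * t)))
          ≤ (M + 1) * (Real.exp ((M + 2) * |L|) *
            (Real.exp ((M * s) * t) + Real.exp ((-(M * s)) * t))) := by
            refine mul_le_mul b0 ?_ (by positivity) (by linarith [abs_nonneg (γ - 1)])
            exact mul_le_mul b1 b2 (Real.exp_pos _).le (Real.exp_pos _).le
        _ = (M + 1) * Real.exp ((M + 2) * |L|) *
            (Real.exp ((M * s) * t) + Real.exp ((-(M * s)) * t)) := by ring
  rw [hnum, hden, mul_div_mul_left _ _ hHx.ne']
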